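/- arXiv:2604.27662 — 3 statements merged into one kernel-verified Lean document; each statement's English description precedes it below -/
import Mathlib

section
/- Let $K \subset \tilde\Omega_T = [0,T]\times\mathbb{R}^n$ be compact and let $\phi$ be a $C^1$ function such that $F^{-1}(t,x) = (\phi(t,x), x)$ is a $C^1$ diffeomorphism from an open set $\mathcal{O} \supset K$ onto its image, with inverse $F(s,x) = (t(s,x),x)$. If $W(t,x,\theta) \in H^1(\tilde\Omega_T\times\mathbb{R})$ has compact support with $(t,x)$-support contained in $K$, then there exists $C>0$ such that for all $\epsilon\in(0,1]$: $\epsilon^{-1/2}\,\|W(t,x,\phi(t,x)/\epsilon)\|_{L^2(\tilde\Omega_T)} \le C\,\|W\|_{H^1(\tilde\Omega_T\times\mathbb{R})}$. -/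
/-!
For fixed `x` and `θ`, apply the one-dimensional trace inequality
`|u(t)|² ≤ ∫ (|u|² + |∂ₜu|²) dt` to `u = W(·, x, θ)`, which vanishes for `t < 0` because
`K ⊆ [0, T] × ℝⁿ`: it bounds `|W(t, x, φ(t,x)/ε)|²` by `G(x, φ(t,x)/ε)`, where
`G(x, θ) = ∫ (|W|² + |∇W|²)(t, x, θ) dt`. Since `F` is a left inverse of `(t, x) ↦ (φ, x)`,
`∂ₜφ` does not vanish on `O`, so `|∂ₜφ| ≥ c > 0` on the compact `K`. Substituting
`θ = φ(t,x)/ε` in the `t`-integral therefore costs a factor `ε / c`, and integrating in `x`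
gives `‖W(·, φ/ε)‖²_{L²} ≤ (ε / c) ‖W‖²_{H¹}`.
-/

open MeasureTheory
open scoped ENNReal

/-- Points of space-time `(t, x) ∈ ℝ × ℝⁿ`. -/
abbrev Pt (n : ℕ) : Type := ℝ × (Fin n → ℝ)

open Set Filter Topology
open scoped RealInnerProductSpace

lemma HasFDerivAt.injective_of_leftInvOn {𝕜 E F : Type*} [NontriviallyNormedField 𝕜]
    [NormedAddCommGroup E] [NormedSpace 𝕜 E] [NormedAddCommGroup F] [NormedSpace 𝕜 F]
    {f : E → F} {f' : E →L[𝕜] F} {g : F → E} {s : Set E} {x : E} (hf : HasFDerivAt f f' x)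
    (hs : s ∈ 𝓝 x) (hg : DifferentiableWithinAt 𝕜 g (f '' s) (f x)) (hgf : LeftInvOn g f s) :
    Function.Injective f' := by
  have hcomp : HasFDerivWithinAt id ((fderivWithin 𝕜 g (f '' s) (f x)).comp f') s x :=
    (hg.hasFDerivWithinAt.comp x hf.hasFDerivWithinAt (mapsTo_image f s)).congr
      (fun y hy => (hgf hy).symm) (hgf (mem_of_mem_nhds hs)).symm
  have hid := (hcomp.hasFDerivAt hs).unique (hasFDerivAt_id x)
  exact Function.LeftInverse.injective (g := fderivWithin 𝕜 g (f '' s) (f x))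
    fun v => congrArg (· v) hid

lemma fderiv_apply_fst_ne_zero {E : Type*} [NormedAddCommGroup E] [NormedSpace ℝ E]
    {φ : ℝ × E → ℝ} {F : ℝ × E → ℝ × E} {O : Set (ℝ × E)} (hO : IsOpen O)
    (hφ : DifferentiableOn ℝ φ O) (hF : DifferentiableOn ℝ F ((fun p => (φ p, p.2)) '' O))
    (hFinv : ∀ p ∈ O, F (φ p, p.2) = p) {p : ℝ × E} (hp : p ∈ O) :
    fderiv ℝ φ p (1, 0) ≠ 0 := by
  have hΦ : HasFDerivAt (fun p => (φ p, p.2)) ((fderiv ℝ φ p).prod (.snd ℝ ℝ E)) p :=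
    (hφ.differentiableAt (hO.mem_nhds hp)).hasFDerivAt.prodMk hasFDerivAt_snd
  intro h0
  have := hΦ.injective_of_leftInvOn (hO.mem_nhds hp) (hF _ (mem_image_of_mem _ hp)) hFinv
    (a₁ := (1, 0)) (a₂ := 0) (by simp [h0])
  simp at this

lemma HasFDerivAt.hasDerivAt_fst {E : Type*} [NormedAddCommGroup E] [NormedSpace ℝ E]
    {φ : ℝ × E → ℝ} {φ' : ℝ × E →L[ℝ] ℝ} {p : ℝ × E} (h : HasFDerivAt φ φ' p) :
    HasDerivAt (fun t => φ (t, p.2)) (φ' (1, 0)) p.1 :=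
  h.comp_hasDerivAt p.1 ((hasDerivAt_id _).prodMk (hasDerivAt_const _ _))

lemma exists_pos_le_abs_fderiv_apply_fst {E : Type*} [NormedAddCommGroup E] [NormedSpace ℝ E]
    {K O : Set (ℝ × E)} (hK : IsCompact K) (hO : IsOpen O) (hKO : K ⊆ O) {φ : ℝ × E → ℝ}
    (hφ : ContDiffOn ℝ 1 φ O) {F : ℝ × E → ℝ × E} (hFinv : ∀ p ∈ O, F (φ p, p.2) = p)
    (hF : DifferentiableOn ℝ F ((fun p => (φ p, p.2)) '' O)) :
    ∃ c, 0 < c ∧ ∀ p ∈ K, c ≤ |fderiv ℝ φ p (1, 0)| :=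
  hK.exists_forall_le' ((continuous_abs.comp_continuousOn
    ((hφ.continuousOn_fderiv_of_isOpen hO le_rfl).clm_apply continuousOn_const)).mono hKO)
    fun _ hp => abs_pos.2 (fderiv_apply_fst_ne_zero hO (hφ.differentiableOn one_ne_zero) hF hFinv
      (hKO hp))

lemma HasFDerivAt.eq_zero_of_eventuallyEq_zero {𝕜 E F : Type*} [NontriviallyNormedField 𝕜]
    [NormedAddCommGroup E] [NormedSpace 𝕜 E] [NormedAddCommGroup F] [NormedSpace 𝕜 F]
    {f : E → F} {f' : E →L[𝕜] F} {x : E} (hf : HasFDerivAt f f' x) (h : f =ᶠ[𝓝 x] 0) :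
    f' = 0 :=
  hf.unique ((hasFDerivAt_const 0 x).congr_of_eventuallyEq h)

lemma ofReal_mul_setLIntegral_le_lintegral_of_le_comp {s : Set ℝ} (hs : MeasurableSet s)
    {χ χ' : ℝ → ℝ} (hχ : ∀ t ∈ s, HasDerivWithinAt χ (χ' t) s t) (hinj : InjOn χ s) {c : ℝ}
    (hc : ∀ t ∈ s, c ≤ |χ' t|) {f G : ℝ → ℝ≥0∞} (hfG : ∀ t ∈ s, f t ≤ G (χ t)) :
    ENNReal.ofReal c * ∫⁻ t in s, f t ≤ ∫⁻ θ, G θ :=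
  calc ENNReal.ofReal c * ∫⁻ t in s, f t = ∫⁻ t in s, ENNReal.ofReal c * f t :=
        (lintegral_const_mul' _ _ ENNReal.ofReal_ne_top).symm
    _ ≤ ∫⁻ t in s, ENNReal.ofReal |χ' t| * G (χ t) :=
        setLIntegral_mono_ae' hs (ae_of_all _ fun t ht => by gcongr <;> simp_all)
    _ = ∫⁻ θ in χ '' s, G θ := (lintegral_image_eq_lintegral_abs_deriv_mul hs hχ hinj G).symm
    _ ≤ ∫⁻ θ, G θ := setLIntegral_le_lintegral _ _

lemma lintegral_prod_prod_eq_lintegral_lintegral_lintegral {α β γ : Type*} [MeasurableSpace α]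
    [MeasurableSpace β] [MeasurableSpace γ] {μ : Measure α} {ν : Measure β} {ρ : Measure γ}
    [SFinite μ] [SFinite ν] [SFinite ρ] {g : (α × β) × γ → ℝ≥0∞} (hg : Measurable g) :
    ∫⁻ q, g q ∂(μ.prod ν).prod ρ = ∫⁻ y, ∫⁻ z, ∫⁻ x, g ((x, y), z) ∂μ ∂ρ ∂ν := by
  rw [lintegral_prod _ hg.aemeasurable, lintegral_prod_symm _ hg.lintegral_prod_right'.aemeasurable]
  refine lintegral_congr fun y => lintegral_lintegral_swap ?_
  exact (hg.comp (by fun_prop)).aemeasurable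

section InnerProductSpace

variable {F : Type*} [NormedAddCommGroup F] [InnerProductSpace ℝ F]

lemma enorm_two_mul_inner_le (x y : F) :
    ‖2 * ⟪x, y⟫‖ₑ ≤ ‖x‖ₑ ^ 2 + ‖y‖ₑ ^ 2 := by
  have h : |2 * ⟪x, y⟫| ≤ ‖x‖ ^ 2 + ‖y‖ ^ 2 := by
    rw [abs_mul, abs_two]
    nlinarith [abs_real_inner_le_norm x y, sq_nonneg (‖x‖ - ‖y‖)]
  rw [Real.enorm_eq_ofReal_abs, ← ofReal_norm, ← ofReal_norm,
    ← ENNReal.ofReal_pow (norm_nonneg _), ← ENNReal.ofReal_pow (norm_nonneg _),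
    ← ENNReal.ofReal_add (by positivity) (by positivity)]
  exact ENNReal.ofReal_le_ofReal h

-- `‖u b‖² = ∫ₐᵇ (‖u‖²)'` and `|(‖u‖²)'| ≤ ‖u‖² + ‖u'‖²`.
lemma sq_enorm_le_lintegral_of_hasDerivAt {u u' : ℝ → F} (hu : ∀ t, HasDerivAt u (u' t) t)
    {a b : ℝ} (hab : a ≤ b) (ha : u a = 0) :
    ‖u b‖ₑ ^ 2 ≤ ∫⁻ t, ‖u t‖ₑ ^ 2 + ‖u' t‖ₑ ^ 2 := by
  set v' : ℝ → ℝ := fun t => 2 * ⟪u t, u' t⟫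
  have hv : ∀ t, HasDerivAt (‖u ·‖ ^ 2) (v' t) t := fun t => (hu t).norm_sq
  have hv'_le : ∫⁻ t, ‖v' t‖ₑ ≤ ∫⁻ t, ‖u t‖ₑ ^ 2 + ‖u' t‖ₑ ^ 2 :=
    lintegral_mono fun t => enorm_two_mul_inner_le _ _
  by_cases hfin : ∫⁻ t, ‖v' t‖ₑ = ∞
  · exact le_top.trans_eq (top_le_iff.1 (hfin ▸ hv'_le)).symm
  have hv'_meas : Measurable v' := by
    rw [show v' = deriv (‖u ·‖ ^ 2) from funext fun t => (hv t).deriv.symm]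
    exact measurable_deriv _
  have hv'_int : Integrable v' := ⟨hv'_meas.aestronglyMeasurable, lt_top_iff_ne_top.2 hfin⟩
  have hftc : ∫ t in a..b, v' t = ‖u b‖ ^ 2 := by
    simpa [ha] using intervalIntegral.integral_eq_sub_of_hasDerivAt (a := a) (b := b)
      (fun t _ => hv t) hv'_int.intervalIntegrable
  calc ‖u b‖ₑ ^ 2 = ‖∫ t in Ioc a b, v' t‖ₑ := by
        rw [← intervalIntegral.integral_of_le hab, hftc, ← enorm_norm (u b), ← enorm_pow]
    _ ≤ ∫⁻ t in Ioc a b, ‖v' t‖ₑ := enorm_integral_le_lintegral_enorm _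
    _ ≤ ∫⁻ t, ‖v' t‖ₑ := setLIntegral_le_lintegral _ _
    _ ≤ _ := hv'_le

lemma sq_enorm_le_lintegral_line {E : Type*} [NormedAddCommGroup E] [NormedSpace ℝ E]
    {W : E → F} {W' : E → E →L[ℝ] F} (hW : ∀ q, HasFDerivAt W (W' q) q) (q : E) {v : E}
    (hv : ‖v‖ ≤ 1) {a b : ℝ} (hab : a ≤ b) (ha : W (q + a • v) = 0) :
    ‖W (q + b • v)‖ₑ ^ 2 ≤ ∫⁻ t : ℝ, ‖W (q + t • v)‖ₑ ^ 2 + ‖W' (q + t • v)‖ₑ ^ 2 := by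
  have hline : ∀ t : ℝ, HasDerivAt (fun s : ℝ => q + s • v) v t := fun t => by
    simpa using ((hasDerivAt_id t).smul_const v).const_add q
  refine (sq_enorm_le_lintegral_of_hasDerivAt (fun t => (hW _).comp_hasDerivAt t (hline t))
    hab ha).trans (lintegral_mono fun t => ?_)
  have hv' : ‖v‖ₑ ≤ 1 := by simpa [← ofReal_norm] using ENNReal.ofReal_le_ofReal hv
  gcongr
  exacts [le_rfl, ((W' _).le_opENorm_of_le hv').trans_eq (mul_one _)]

lemma ofReal_mul_setLIntegral_trace_on_graph_le [CompleteSpace F] {n : ℕ} {K : Set (Pt n)}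
    (hK : MeasurableSet K) (hK0 : ∀ p ∈ K, 0 ≤ p.1)
    {W : Pt n × ℝ → F} {W' : Pt n × ℝ → (Pt n × ℝ) →L[ℝ] F} (hW : ∀ q, HasFDerivAt W (W' q) q)
    (hWK : ∀ q : Pt n × ℝ, q.1 ∉ K → W q = 0) {ψ D : Pt n → ℝ} (hψK : ContinuousOn ψ K)
    (hψ : ∀ p ∈ K, HasDerivAt (fun t => ψ (t, p.2)) (D p) p.1)
    (hinj : ∀ x, InjOn (fun t => ψ (t, x)) {t | (t, x) ∈ K}) {c : ℝ} (hc : ∀ p ∈ K, c ≤ |D p|) :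
    ENNReal.ofReal c * ∫⁻ p in K, ‖W (p, ψ p)‖ₑ ^ 2 ≤ ∫⁻ q, ‖W q‖ₑ ^ 2 + ‖W' q‖ₑ ^ 2 := by
  set f : Pt n → ℝ≥0∞ := fun p => ‖W (p, ψ p)‖ₑ ^ 2
  set g : Pt n × ℝ → ℝ≥0∞ := fun q => ‖W q‖ₑ ^ 2 + ‖W' q‖ₑ ^ 2
  have hWc : Continuous W := continuous_iff_continuousAt.2 fun q => (hW q).continuousAt
  have hW'm : Measurable W' := by
    rw [show W' = fderiv ℝ W from funext fun q => (hW q).fderiv.symm]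
    exact measurable_fderiv ℝ W
  have hg : Measurable g :=
    ((continuous_enorm.comp hWc).measurable.pow_const 2).add (hW'm.enorm.pow_const 2)
  have hf : AEMeasurable (K.indicator f) :=
    (aemeasurable_indicator_iff hK).2 <|
      ((ENNReal.continuous_pow 2).comp_continuousOn ((continuous_enorm.comp hWc).comp_continuousOn
        (continuousOn_id.prodMk hψK))).aemeasurable hK
  have slice : ∀ x, ENNReal.ofReal c * ∫⁻ t in {t | (t, x) ∈ K}, f (t, x) ≤
      ∫⁻ θ, ∫⁻ t, g ((t, x), θ) := by
    intro x
    refine ofReal_mul_setLIntegral_le_lintegral_of_le_comp (hK.preimage measurable_prodMk_right)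
      (fun t ht => (hψ _ ht).hasDerivWithinAt) (hinj x) (fun t ht => hc _ ht) fun t ht => ?_
    have hline : ∀ s : ℝ,
        ((0, x), ψ (t, x)) + s • ((1, 0), 0) = (((s, x), ψ (t, x)) : Pt n × ℝ) := fun s => by
      ext <;> simp
    have hv : ‖(((1, 0), 0) : Pt n × ℝ)‖ ≤ 1 := by simp [Prod.norm_def]
    have hvanish : W (((0, x), ψ (t, x)) + (-1 : ℝ) • ((1, 0), 0)) = 0 := by
      rw [hline]
      exact hWK _ fun h => by linarith [hK0 _ h]
    simpa only [hline] using sq_enorm_le_lintegral_line hW ((0, x), ψ (t, x)) hv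
      (by linarith [hK0 _ ht] : (-1 : ℝ) ≤ t) hvanish
  calc ENNReal.ofReal c * ∫⁻ p in K, f p
        = ∫⁻ x, ENNReal.ofReal c * ∫⁻ t in {t | (t, x) ∈ K}, f (t, x) := by
          rw [← lintegral_indicator hK, Measure.volume_eq_prod, lintegral_prod_symm _ hf,
            ← lintegral_const_mul' _ _ ENNReal.ofReal_ne_top]
          refine lintegral_congr fun x => ?_
          congr 1
          exact lintegral_indicator (f := fun t => f (t, x)) (hK.preimage measurable_prodMk_right)
    _ ≤ ∫⁻ x, ∫⁻ θ, ∫⁻ t, g ((t, x), θ) := lintegral_mono slice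
    _ = ∫⁻ q, g q := (lintegral_prod_prod_eq_lintegral_lintegral_lintegral hg).symm

end InnerProductSpace

lemma rpow_half_le_ofReal_sqrt_inv_mul {a b : ℝ≥0∞} {c : ℝ} (hc : 0 < c)
    (h : ENNReal.ofReal c * a ≤ b) :
    a ^ (1 / 2 : ℝ) ≤ ENNReal.ofReal √c⁻¹ * b ^ (1 / 2 : ℝ) := by
  have ha : a ≤ ENNReal.ofReal c⁻¹ * b :=
    calc a = ENNReal.ofReal c⁻¹ * ENNReal.ofReal c * a := by
          rw [← ENNReal.ofReal_mul (by positivity), inv_mul_cancel₀ hc.ne', ENNReal.ofReal_one,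
            one_mul]
      _ ≤ ENNReal.ofReal c⁻¹ * b := by rw [mul_assoc]; gcongr
  calc a ^ (1 / 2 : ℝ) ≤ (ENNReal.ofReal c⁻¹ * b) ^ (1 / 2 : ℝ) :=
        ENNReal.rpow_le_rpow ha (by norm_num)
    _ = ENNReal.ofReal √c⁻¹ * b ^ (1 / 2 : ℝ) := by
        rw [ENNReal.mul_rpow_of_nonneg _ _ (by norm_num),
          ENNReal.ofReal_rpow_of_nonneg (by positivity) (by norm_num), Real.sqrt_eq_rpow]

theorem pulse_refined_estimate_general {n : ℕ} (T : ℝ)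
    (K : Set (Pt n)) (hK : IsCompact K)
    (hKΩ : K ⊆ {p : Pt n | p.1 ∈ Set.Icc 0 T})
    (O : Set (Pt n)) (hO : IsOpen O) (hKO : K ⊆ O)
    (φ : Pt n → ℝ) (hφ : ContDiffOn ℝ 1 φ O)
    (hΦinj : Set.InjOn (fun p : Pt n => ((φ p, p.2) : Pt n)) O)
    (F : Pt n → Pt n)
    (hFinv : ∀ p ∈ O, F (φ p, p.2) = p)
    (hFC1 : ContDiffOn ℝ 1 F ((fun p : Pt n => ((φ p, p.2) : Pt n)) '' O))
    (W : Pt n × ℝ → ℂ) (W' : Pt n × ℝ → (Pt n × ℝ) →L[ℝ] ℂ)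
    (hW : ∀ q, HasFDerivAt W (W' q) q)
    (hWK : ∀ q : Pt n × ℝ, q.1 ∉ K → W q = 0) :
    ∃ C : ℝ, 0 < C ∧
      ∀ ε : ℝ, ε ∈ Set.Ioc (0 : ℝ) 1 →
        (∫⁻ p in {p : Pt n | p.1 ∈ Set.Icc 0 T},
            (‖W (p, φ p / ε)‖₊ : ℝ≥0∞) ^ 2) ^ ((1 : ℝ) / 2) ≤
          ENNReal.ofReal (C * Real.sqrt ε) *
            (∫⁻ q in {p : Pt n | p.1 ∈ Set.Icc 0 T} ×ˢ (Set.univ : Set ℝ),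
              ((‖W q‖₊ : ℝ≥0∞) ^ 2 + (‖W' q‖₊ : ℝ≥0∞) ^ 2)) ^ ((1 : ℝ) / 2) := by
  have hφd : ∀ p ∈ O, HasFDerivAt φ (fderiv ℝ φ p) p := fun p hp =>
    ((hφ.differentiableOn one_ne_zero).differentiableAt (hO.mem_nhds hp)).hasFDerivAt
  obtain ⟨c, hc, hcK⟩ := exists_pos_le_abs_fderiv_apply_fst hK hO hKO hφ hFinv
    (hFC1.differentiableOn one_ne_zero)
  refine ⟨√c⁻¹, by positivity, ?_⟩
  rintro ε ⟨hε, -⟩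
  have hinj : ∀ x, InjOn (fun t => φ (t, x) / ε) {t | (t, x) ∈ K} := fun x t₁ h₁ t₂ h₂ he =>
    congrArg Prod.fst <| hΦinj (hKO h₁) (hKO h₂) (by simp_all [div_left_inj' hε.ne'])
  have key := ofReal_mul_setLIntegral_trace_on_graph_le hK.measurableSet (fun p hp => (hKΩ hp).1)
    hW hWK ((hφ.continuousOn.mono hKO).div_const ε)
    (fun p hp => (hφd p (hKO hp)).hasDerivAt_fst.div_const ε) hinj (c := c / ε) fun p hp => by
      rw [abs_div, abs_of_pos hε]; exact div_le_div_of_nonneg_right (hcK p hp) hε.le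
  have hlhs : ∫⁻ p in {p : Pt n | p.1 ∈ Set.Icc 0 T}, ‖W (p, φ p / ε)‖ₑ ^ 2 ≤
      ∫⁻ p in K, ‖W (p, φ p / ε)‖ₑ ^ 2 :=
    (setLIntegral_le_lintegral _ _).trans_eq <| Eq.symm <| setLIntegral_eq_of_support_subset
      fun p hp => by_contra fun hpK => hp (by simp [hWK (p, φ p / ε) hpK])
  have hrhs : ∫⁻ q in {p : Pt n | p.1 ∈ Set.Icc 0 T} ×ˢ (Set.univ : Set ℝ),
      ‖W q‖ₑ ^ 2 + ‖W' q‖ₑ ^ 2 = ∫⁻ q, ‖W q‖ₑ ^ 2 + ‖W' q‖ₑ ^ 2 := by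
    refine setLIntegral_eq_of_support_subset fun q hq => ⟨by_contra fun hqS => hq ?_, mem_univ _⟩
    have hqK : q.1 ∉ K := fun h => hqS (hKΩ h)
    have hW'q : W' q = 0 := (hW q).eq_zero_of_eventuallyEq_zero <| by
      filter_upwards [(hK.isClosed.isOpen_compl.preimage continuous_fst).mem_nhds hqK] with r hr
      exact hWK r hr
    simp [hWK q hqK, hW'q, enorm_eq_nnnorm]
  simp only [← enorm_eq_nnnorm, hrhs]
  calc _ ≤ ENNReal.ofReal √(c / ε)⁻¹ * (∫⁻ q, ‖W q‖ₑ ^ 2 + ‖W' q‖ₑ ^ 2) ^ (1 / 2 : ℝ) :=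
        rpow_half_le_ofReal_sqrt_inv_mul (div_pos hc hε) ((mul_le_mul_right hlhs _).trans key)
    _ = _ := by rw [inv_div, div_eq_inv_mul, Real.sqrt_mul (inv_nonneg.2 hc.le)]

/-- **Refined pulse estimate (Proposition `a11z`(i)).**  Let `Ω̃_T = [0,T] × ℝⁿ`, let `K ⊂ Ω̃_T`
be compact, and let `φ` be `C¹` on an open set `𝒪 ⊇ K` such that
`F⁻¹(t,x) = (φ(t,x), x)` is a `C¹` diffeomorphism of `𝒪` onto its image (with `C¹` inverse
`F(s,x) = (t(s,x), x)`).  If `W(t,x,θ) ∈ H¹(Ω̃_T × ℝ)` (encoded by a pointwise total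
derivative `W'`) has compact support with `(t,x)`-support contained in `K`, then there is a
`C > 0` such that for all `ε ∈ (0,1]`:
`ε^{-1/2} ‖W(t,x,φ(t,x)/ε)‖_{L²(Ω̃_T)} ≤ C ‖W‖_{H¹(Ω̃_T × ℝ)}`. -/
theorem pulse_refined_estimate {n : ℕ} (T : ℝ) (hT : 0 < T)
    (K : Set (Pt n)) (hK : IsCompact K)
    (hKΩ : K ⊆ {p : Pt n | p.1 ∈ Set.Icc 0 T})
    (O : Set (Pt n)) (hO : IsOpen O) (hKO : K ⊆ O)
    (φ : Pt n → ℝ) (hφ : ContDiffOn ℝ 1 φ O)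
    (hΦinj : Set.InjOn (fun p : Pt n => ((φ p, p.2) : Pt n)) O)
    (F : Pt n → Pt n)
    (hFinv : ∀ p ∈ O, F (φ p, p.2) = p)
    (hFC1 : ContDiffOn ℝ 1 F ((fun p : Pt n => ((φ p, p.2) : Pt n)) '' O))
    (W : Pt n × ℝ → ℂ) (W' : Pt n × ℝ → (Pt n × ℝ) →L[ℝ] ℂ)
    (hW : ∀ q, HasFDerivAt W (W' q) q)
    (hWsupp : HasCompactSupport W)
    (hWK : ∀ q : Pt n × ℝ, q.1 ∉ K → W q = 0) :
    ∃ C : ℝ, 0 < C ∧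
      ∀ ε : ℝ, ε ∈ Set.Ioc (0 : ℝ) 1 →
        (∫⁻ p in {p : Pt n | p.1 ∈ Set.Icc 0 T},
            (‖W (p, φ p / ε)‖₊ : ℝ≥0∞) ^ 2) ^ ((1 : ℝ) / 2) ≤
          ENNReal.ofReal (C * Real.sqrt ε) *
            (∫⁻ q in {p : Pt n | p.1 ∈ Set.Icc 0 T} ×ˢ (Set.univ : Set ℝ),
              ((‖W q‖₊ : ℝ≥0∞) ^ 2 + (‖W' q‖₊ : ℝ≥0∞) ^ 2)) ^ ((1 : ℝ) / 2) :=
  pulse_refined_estimate_general T K hK hKΩ O hO hKO φ hφ hΦinj F hFinv hFC1 W W' hW hWK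
end

section
/- Let $K$, $\phi$, $F$ be as above, let $W \in H^1(\tilde\Omega_T\times\mathbb{R})$ have $(t,x)$-support in $K$, and set $\mathcal{S} = \{(t,x)\in\tilde\Omega_T : \phi(t,x) = 0\}$. Then $\lim_{\epsilon\to 0}\epsilon^{-1/2}\|W(t,x,\phi/\epsilon)\|_{L^2(\tilde\Omega_T)} = \big\| W / |\nabla_{t,x}\phi|^{1/2} \big\|_{L^2(\mathcal{S}\times\mathbb{R}_\theta)}$, i.e. the limiting $L^2$ size of the rescaled pulse equals the weighted $L^2$ norm of the trace of $W$ on the zero level set of $\phi$. -/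
open MeasureTheory Filter Set
open scoped ENNReal Topology

/-- The Euclidean length of the space-time gradient `|∇_{t,x}φ|` encoded by the differential
`L = dφ ∈ (ℝ × ℝⁿ →L[ℝ] ℝ)`. -/
noncomputable def gradNorm {n : ℕ} (L : Pt n →L[ℝ] ℝ) : ℝ :=
  Real.sqrt ((L (1, 0)) ^ 2 + ∑ i : Fin n, (L (0, Pi.single i 1)) ^ 2)

/-! Straighten the level sets of `φ` by `Φ(t, x) = (φ(t, x), x)`, whose inverse is `F`. The
change of variables `p = F r` turns `∫ |W(p, φ p / ε)|² dp` into
`∫ |det DF(r)| |W(F r, r₁ / ε)|² dr`, and the substitution `r₁ = ε s` extracts the factor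
`ε` and leaves the integrand `G((ε s, x), s)` with `G(r, θ) = |det DF(r)| |W(F r, θ)|²`
continuous and compactly supported; by dominated convergence its integral tends to
`∫∫ G((0, x), θ) dθ dx`. On the slice `s = 0` one has `F(0, x) = (τ x, x)`, and
differentiating `φ(τ x, x) = 0` gives `∇ₓφ = -∂ₜφ ∇τ`, so
`|det DF(0, x)| = 1 / |∂ₜφ| = √(1 + |∇τ|²) / |∇_{t,x}φ|`. -/

section LeftInverse

variable {E F : Type*} [NormedAddCommGroup E] [NormedSpace ℝ E] [NormedAddCommGroup F]
  [NormedSpace ℝ F]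

theorem HasFDerivAt.comp_eq_id_of_leftInvOn {f : E → F} {g : F → E} {f' : E →L[ℝ] F}
    {g' : F →L[ℝ] E} {s : Set E} {p : E} (hs : s ∈ 𝓝 p) (hgf : ∀ x ∈ s, g (f x) = x)
    (hf : HasFDerivAt f f' p) (hg : HasFDerivWithinAt g g' (f '' s) (f p)) :
    g'.comp f' = ContinuousLinearMap.id ℝ E := by
  have hcomp : HasFDerivAt (g ∘ f) (g'.comp f') p :=
    (hg.comp p hf.hasFDerivWithinAt (mapsTo_image f s)).hasFDerivAt hs
  have hid : (g ∘ f) =ᶠ[𝓝 p] id := eventually_of_mem hs hgf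
  exact (hcomp.congr_of_eventuallyEq hid.symm).unique (hasFDerivAt_id p)

theorem ContinuousLinearMap.det_mul_det_eq_one_of_comp_eq_id {B A : E →L[ℝ] E}
    (h : B.comp A = ContinuousLinearMap.id ℝ E) : B.det * A.det = 1 := by
  rw [ContinuousLinearMap.det, ContinuousLinearMap.det, ← LinearMap.det_comp]
  exact (congrArg (fun C : E →L[ℝ] E => LinearMap.det (C : E →ₗ[ℝ] E)) h).trans
    LinearMap.det_id

variable [FiniteDimensional ℝ E]

theorem isOpen_image_of_leftInvOn {f g : E → E} {s : Set E} (hs : IsOpen s)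
    (hf : ContDiffOn ℝ 1 f s) (hg : DifferentiableOn ℝ g (f '' s))
    (hgf : ∀ x ∈ s, g (f x) = x) : IsOpen (f '' s) := by
  rw [isOpen_iff_mem_nhds]
  rintro _ ⟨p, hp, rfl⟩
  have hfp : HasStrictFDerivAt f (fderiv ℝ f p) p :=
    (hf.contDiffAt (hs.mem_nhds hp)).hasStrictFDerivAt one_ne_zero
  have hinv := hfp.hasFDerivAt.comp_eq_id_of_leftInvOn (hs.mem_nhds hp) hgf
    (hg _ (mem_image_of_mem f hp)).hasFDerivWithinAt
  have hdet : (fderiv ℝ f p).det ≠ 0 :=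
    right_ne_zero_of_mul_eq_one (ContinuousLinearMap.det_mul_det_eq_one_of_comp_eq_id hinv)
  have hfp' : HasStrictFDerivAt f
      ((fderiv ℝ f p).toContinuousLinearEquivOfDetNeZero hdet : E →L[ℝ] E) p := by
    convert hfp; ext; simp
  rw [← hfp'.map_nhds_eq_of_equiv]
  exact image_mem_map (hs.mem_nhds hp)

variable [MeasurableSpace E] [BorelSpace E] (μ : Measure E) [μ.IsAddHaarMeasure]

theorem setIntegral_eq_setIntegral_image_of_leftInvOn {V : Type*} [NormedAddCommGroup V]
    [NormedSpace ℝ V] {f g : E → E} {f' g' : E → E →L[ℝ] E} {s : Set E} (hs : IsOpen s)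
    (hf : ∀ x ∈ s, HasFDerivAt f (f' x) x) (hinj : InjOn f s) (hgf : ∀ x ∈ s, g (f x) = x)
    (hg : ∀ y ∈ f '' s, HasFDerivWithinAt g (g' y) (f '' s) y) (u : E → V) :
    ∫ x in s, u x ∂μ = ∫ y in f '' s, |(g' y).det| • u (g y) ∂μ := by
  rw [integral_image_eq_integral_abs_det_fderiv_smul μ hs.measurableSet
    (fun x hx => (hf x hx).hasFDerivWithinAt) hinj]
  refine setIntegral_congr_fun hs.measurableSet fun x hx => ?_
  have hdet := ContinuousLinearMap.det_mul_det_eq_one_of_comp_eq_id <|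
    (hf x hx).comp_eq_id_of_leftInvOn (hs.mem_nhds hx) hgf (hg _ (mem_image_of_mem f hx))
  rw [hgf x hx, smul_smul, ← abs_mul, mul_comm, hdet, abs_one, one_smul]

end LeftInverse

section Rescaling

variable {E V : Type*} [MeasurableSpace E] (μ : Measure E) [SFinite μ] [NormedAddCommGroup V]
  [NormedSpace ℝ V]

theorem integral_comp_mul_fst (u : ℝ × E → V) {c : ℝ} (hc : c ≠ 0) :
    ∫ q, u (c * q.1, q.2) ∂(volume.prod μ) = |c⁻¹| • ∫ q, u q ∂(volume.prod μ) := by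
  have hemb : MeasurableEmbedding (Prod.map (c * ·) id : ℝ × E → ℝ × E) :=
    (measurableEmbedding_mulLeft₀ hc).prodMap MeasurableEmbedding.id
  have hmap : (volume.prod μ).map (Prod.map (c * ·) id) =
      ENNReal.ofReal |c⁻¹| • volume.prod μ := by
    rw [← Measure.map_prod_map _ _ (measurable_const_mul c) measurable_id,
      Real.map_volume_mul_left hc, Measure.map_id, Measure.prod_smul_left]
  have hcomp := hemb.integral_map (μ := volume.prod μ) u
  rw [hmap, integral_smul_measure, ENNReal.toReal_ofReal (abs_nonneg _)] at hcomp
  exact hcomp.symm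

variable [TopologicalSpace E] [SecondCountableTopology E] [BorelSpace E] [T2Space E]
  [IsFiniteMeasureOnCompacts μ]

theorem tendsto_integral_comp_mul_fst {G : (ℝ × E) × ℝ → V} (hG : Continuous G)
    (hGc : HasCompactSupport G) :
    Tendsto (fun c : ℝ => ∫ q, G ((c * q.1, q.2), q.1) ∂(volume.prod μ)) (𝓝 0)
      (𝓝 (∫ x, ∫ θ, G ((0, x), θ) ∂volume ∂μ)) := by
  obtain ⟨C, hC⟩ := hG.bounded_above_of_compact_support hGc
  set D : Set (ℝ × E) := (Prod.snd '' tsupport G) ×ˢ ((fun w => w.1.2) '' tsupport G)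
  have hD : IsCompact D := (hGc.image continuous_snd).prod (hGc.image (by fun_prop))
  have hdom : ∀ c q, ‖G ((c * q.1, q.2), q.1)‖ ≤ D.indicator (fun _ => C) q := by
    intro c q
    by_cases hq : G ((c * q.1, q.2), q.1) = 0
    · rw [hq, norm_zero]
      exact indicator_nonneg (fun _ _ => (norm_nonneg _).trans (hC ((0, q.2), q.1))) q
    · have hmem := subset_tsupport G hq
      rw [indicator_of_mem (show q ∈ D from ⟨⟨_, hmem, rfl⟩, ⟨_, hmem, rfl⟩⟩)]
      exact hC _
  have hint : Integrable (D.indicator fun _ => C) (volume.prod μ) :=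
    (integrable_indicator_iff hD.measurableSet).2 (integrableOn_const hD.measure_lt_top.ne)
  have hcont : ∀ c : ℝ, Continuous fun q : ℝ × E => G ((c * q.1, q.2), q.1) := by
    fun_prop
  have hpt : ∀ q : ℝ × E, Tendsto (fun c : ℝ => G ((c * q.1, q.2), q.1)) (𝓝 0)
      (𝓝 (G ((0, q.2), q.1))) := fun q => by
    have hcont' : Continuous fun c : ℝ => G ((c * q.1, q.2), q.1) := by fun_prop
    simpa using hcont'.tendsto 0
  have hlim := tendsto_integral_filter_of_dominated_convergence _
    (Eventually.of_forall fun c => (hcont c).aestronglyMeasurable)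
    (Eventually.of_forall fun c => ae_of_all _ (hdom c)) hint (ae_of_all _ hpt)
  have hint0 : Integrable (fun q : ℝ × E => G ((0, q.2), q.1)) (volume.prod μ) := by
    simpa using hint.mono' (hcont 0).aestronglyMeasurable (ae_of_all _ (hdom 0))
  rwa [integral_prod_symm _ hint0] at hlim

end Rescaling

section PulledBackDensity

variable {E V : Type*} [NormedAddCommGroup E] [NormedSpace ℝ E] [NormedAddCommGroup V]
  {S C : Set E} {F : E → E} {W : E × ℝ → V}

/-- The pulse integrand in the coordinates `r = Φ(t, x)`, Jacobian included. -/
noncomputable def pulledBackDensity (S : Set E) (F : E → E) (W : E × ℝ → V) (q : E × ℝ) :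
    ℝ :=
  S.indicator (fun r => |(fderiv ℝ F r).det| * ‖W (F r, q.2)‖ ^ 2) q.1

theorem tsupport_pulledBackDensity_subset (hC : IsCompact C) (hWc : HasCompactSupport W)
    (hWC : ∀ r ∈ S, ∀ θ, W (F r, θ) ≠ 0 → r ∈ C) :
    tsupport (pulledBackDensity S F W) ⊆ C ×ˢ (Prod.snd '' tsupport W) := by
  refine closure_minimal (fun q hq => ?_) (hC.prod (hWc.image continuous_snd)).isClosed
  have hqS : q.1 ∈ S := by
    by_contra h
    exact hq (indicator_of_notMem h _)
  have hW : W (F q.1, q.2) ≠ 0 := by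
    intro h
    apply hq
    simp [pulledBackDensity, indicator_of_mem hqS, h]
  exact ⟨hWC _ hqS _ hW, _, subset_tsupport W hW, rfl⟩

theorem continuous_pulledBackDensity (hS : IsOpen S) (hF : ContDiffOn ℝ 1 F S)
    (hW : Continuous W) (hWc : HasCompactSupport W) (hC : IsCompact C) (hCS : C ⊆ S)
    (hWC : ∀ r ∈ S, ∀ θ, W (F r, θ) ≠ 0 → r ∈ C) :
    Continuous (pulledBackDensity S F W) := by
  refine ContinuousOn.continuous_of_tsupport_subset (s := S ×ˢ univ) ?_ (hS.prod isOpen_univ)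
    ((tsupport_pulledBackDensity_subset hC hWc hWC).trans (prod_mono hCS (subset_univ _)))
  have hdet : ContinuousOn (fun r => |(fderiv ℝ F r).det|) S :=
    (ContinuousLinearMap.continuous_det.comp_continuousOn
      (hF.continuousOn_fderiv_of_isOpen hS le_rfl)).abs
  refine ContinuousOn.congr (f := fun q => |(fderiv ℝ F q.1).det| * ‖W (F q.1, q.2)‖ ^ 2) ?_
    fun q hq => indicator_of_mem hq.1 (fun r => |(fderiv ℝ F r).det| * ‖W (F r, q.2)‖ ^ 2)
  exact (hdet.comp continuousOn_fst fun q hq => hq.1).mul <|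
    ((hW.comp_continuousOn ((hF.continuousOn.comp continuousOn_fst fun q hq => hq.1).prodMk
      continuousOn_snd)).norm).pow 2

theorem hasCompactSupport_pulledBackDensity (hC : IsCompact C) (hWc : HasCompactSupport W)
    (hWC : ∀ r ∈ S, ∀ θ, W (F r, θ) ≠ 0 → r ∈ C) :
    HasCompactSupport (pulledBackDensity S F W) :=
  (hC.prod (hWc.image continuous_snd)).of_isClosed_subset (isClosed_tsupport _)
    (tsupport_pulledBackDensity_subset hC hWc hWC)

theorem integral_pulledBackDensity_fiber (r : E) :
    ∫ θ, pulledBackDensity S F W (r, θ) =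
      S.indicator (fun r => |(fderiv ℝ F r).det| * ∫ θ, ‖W (F r, θ)‖ ^ 2) r := by
  by_cases hr : r ∈ S <;> simp [pulledBackDensity, hr, integral_const_mul]

end PulledBackDensity

theorem ContinuousLinearMap.det_prod_snd {E : Type*} [NormedAddCommGroup E] [NormedSpace ℝ E]
    [FiniteDimensional ℝ E] (L : ℝ × E →L[ℝ] ℝ) :
    (L.prod (ContinuousLinearMap.snd ℝ ℝ E)).det = L (1, 0) := by
  classical
  let b := (Module.Basis.singleton Unit ℝ).prod (Module.finBasis ℝ E)
  rw [ContinuousLinearMap.det, ← LinearMap.det_toMatrix b]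
  have hM : LinearMap.toMatrix b b
      (L.prod (ContinuousLinearMap.snd ℝ ℝ E) : ℝ × E →ₗ[ℝ] ℝ × E) =
        Matrix.fromBlocks (Matrix.of fun _ _ : Unit => L (1, 0))
          (Matrix.of fun _ j => L (0, Module.finBasis ℝ E j)) 0 1 := by
    ext (i | i) (j | j) <;>
      simp [LinearMap.toMatrix_apply, b, Module.Basis.prod_apply, Matrix.one_apply,
        Finsupp.single_apply, eq_comm]
  rw [hM, Matrix.det_fromBlocks_zero₂₁]
  simp

section Slice

variable {n : ℕ}

theorem gradNorm_eq_of_comp_graph_eq_zero (L : Pt n →L[ℝ] ℝ)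
    (ℓ : (Fin n → ℝ) →L[ℝ] ℝ) (h : L.comp (ℓ.prod (ContinuousLinearMap.id ℝ _)) = 0) :
    gradNorm L = |L (1, 0)| * √(1 + ∑ i, (ℓ (Pi.single i 1)) ^ 2) := by
  have hL : ∀ i, L (0, Pi.single i 1) = -(ℓ (Pi.single i 1) * L (1, 0)) := fun i => by
    have hi := congrArg (fun M : (Fin n → ℝ) →L[ℝ] ℝ => M (Pi.single i 1)) h
    have hsplit : ((ℓ (Pi.single i 1), Pi.single i 1) : Pt n) =
        ℓ (Pi.single i 1) • ((1 : ℝ), (0 : Fin n → ℝ)) + ((0 : ℝ), Pi.single i 1) := by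
      simp
    simp only [ContinuousLinearMap.comp_apply, ContinuousLinearMap.prod_apply,
      ContinuousLinearMap.id_apply, zero_apply] at hi
    rw [hsplit, map_add, map_smul, smul_eq_mul] at hi
    linarith
  rw [gradNorm, ← Real.sqrt_sq_eq_abs, ← Real.sqrt_mul (sq_nonneg _)]
  simp only [hL, neg_sq, mul_pow, mul_add, Finset.mul_sum]
  ring_nf

theorem abs_det_eq_sqrt_div_gradNorm {B : Pt n →L[ℝ] Pt n} {L : Pt n →L[ℝ] ℝ}
    {ℓ : (Fin n → ℝ) →L[ℝ] ℝ} (hB : B.det * L (1, 0) = 1)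
    (h : L.comp (ℓ.prod (ContinuousLinearMap.id ℝ _)) = 0) :
    |B.det| = √(1 + ∑ i, (ℓ (Pi.single i 1)) ^ 2) / gradNorm L := by
  have hα : L (1, 0) ≠ 0 := right_ne_zero_of_mul_eq_one hB
  have hsqrt : 0 < √(1 + ∑ i, (ℓ (Pi.single i 1)) ^ 2) := Real.sqrt_pos.2 (by positivity)
  rw [gradNorm_eq_of_comp_graph_eq_zero L ℓ h, eq_inv_of_mul_eq_one_left hB, abs_inv]
  field_simp

variable {O : Set (Pt n)} {φ : Pt n → ℝ} {F : Pt n → Pt n} {τ : (Fin n → ℝ) → ℝ}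

local notation "Φ" => fun p : Pt n => ((φ p, Prod.snd p) : Pt n)

theorem graph_of_mem_slice (hFinv : ∀ p ∈ O, F (φ p, p.2) = p)
    (hτ : ∀ x, τ x = (F ((0 : ℝ), x)).1) {x : Fin n → ℝ}
    (hx : ((0 : ℝ), x) ∈ Φ '' O) :
    F ((0 : ℝ), x) = (τ x, x) ∧ ((τ x, x) : Pt n) ∈ O ∧ φ (τ x, x) = 0 := by
  obtain ⟨p, hp, hpx⟩ := hx
  obtain ⟨hφp, rfl⟩ := Prod.mk.inj hpx
  have hF : F ((0 : ℝ), p.2) = p := by rw [← hφp]; exact hFinv p hp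
  have hp' : ((τ p.2, p.2) : Pt n) = p := by rw [hτ, hF]
  rw [hp', hF]
  exact ⟨rfl, hp, hφp⟩

theorem abs_det_eq_of_mem_slice {φ' : Pt n → (Pt n →L[ℝ] ℝ)}
    {ℓ : (Fin n → ℝ) →L[ℝ] ℝ} {F' : Pt n →L[ℝ] Pt n} {x : Fin n → ℝ} (hO : IsOpen O)
    (hφ' : ∀ p ∈ O, HasFDerivAt φ (φ' p) p) (hFinv : ∀ p ∈ O, F (φ p, p.2) = p)
    (hS : IsOpen (Φ '' O)) (hτ : ∀ x, τ x = (F ((0 : ℝ), x)).1)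
    (hτ' : HasFDerivAt τ ℓ x) (hF : HasFDerivAt F F' ((0 : ℝ), x))
    (hx : ((0 : ℝ), x) ∈ Φ '' O) :
    |F'.det| = √(1 + ∑ i, (ℓ (Pi.single i 1)) ^ 2) / gradNorm (φ' (τ x, x)) := by
  obtain ⟨-, hpO, hφ0⟩ := graph_of_mem_slice hFinv hτ hx
  have hflat : (fun y => φ (τ y, y)) =ᶠ[𝓝 x] fun _ => 0 := by
    filter_upwards [(hS.preimage (Continuous.prodMk_right 0)).mem_nhds hx] with y hy
    exact (graph_of_mem_slice hFinv hτ hy).2.2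
  have hgr : HasFDerivAt (fun y => ((τ y, y) : Pt n))
      (ℓ.prod (ContinuousLinearMap.id ℝ _)) x := hτ'.prodMk (hasFDerivAt_id x)
  have hgraph : (φ' (τ x, x)).comp (ℓ.prod (ContinuousLinearMap.id ℝ _)) = 0 :=
    ((hφ' _ hpO).comp (f := fun y => ((τ y, y) : Pt n)) x hgr).unique
      ((hasFDerivAt_const 0 x).congr_of_eventuallyEq hflat)
  have hΦ : HasFDerivAt Φ ((φ' (τ x, x)).prod (ContinuousLinearMap.snd ℝ ℝ _))
      (τ x, x) := (hφ' _ hpO).prodMk hasFDerivAt_snd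
  have hinv := hΦ.comp_eq_id_of_leftInvOn (hO.mem_nhds hpO) hFinv <| by
    rw [show ((φ (τ x, x), (τ x, x).2) : Pt n) = ((0 : ℝ), x) from Prod.ext hφ0 rfl]
    exact hF.hasFDerivWithinAt
  refine abs_det_eq_sqrt_div_gradNorm ?_ hgraph
  rw [← ContinuousLinearMap.det_prod_snd]
  exact ContinuousLinearMap.det_mul_det_eq_one_of_comp_eq_id hinv

theorem integral_pulledBackDensity_slice {V : Type*} [NormedAddCommGroup V]
    {φ' : Pt n → (Pt n →L[ℝ] ℝ)} {τ' : (Fin n → ℝ) → ((Fin n → ℝ) →L[ℝ] ℝ)}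
    (hO : IsOpen O) (hφ' : ∀ p ∈ O, HasFDerivAt φ (φ' p) p)
    (hFinv : ∀ p ∈ O, F (φ p, p.2) = p) (hS : IsOpen (Φ '' O))
    (hF : ∀ q ∈ Φ '' O, HasFDerivAt F (fderiv ℝ F q) q)
    (hτ : ∀ x, τ x = (F ((0 : ℝ), x)).1) (hτ' : ∀ x, HasFDerivAt τ (τ' x) x)
    (W : Pt n × ℝ → V) :
    ∫ x, ∫ θ, pulledBackDensity (Φ '' O) F W (((0 : ℝ), x), θ) =
      ∫ x in {x | ((0 : ℝ), x) ∈ Φ '' O}, ∫ θ, ‖W ((τ x, x), θ)‖ ^ 2 *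
        √(1 + ∑ i, (τ' x (Pi.single i 1)) ^ 2) / gradNorm (φ' (τ x, x)) := by
  simp_rw [integral_pulledBackDensity_fiber]
  have hV : MeasurableSet {x | ((0 : ℝ), x) ∈ Φ '' O} :=
    (hS.preimage (Continuous.prodMk_right 0)).measurableSet
  rw [← integral_indicator hV]
  congr 1
  ext x
  by_cases hx : ((0 : ℝ), x) ∈ Φ '' O
  · rw [indicator_of_mem hx, indicator_of_mem (s := {x | ((0 : ℝ), x) ∈ Φ '' O}) hx,
      abs_det_eq_of_mem_slice hO hφ' hFinv hS hτ (hτ' x) (hF _ hx) hx,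
      (graph_of_mem_slice hFinv hτ hx).1]
    simp_rw [mul_div_assoc]
    rw [integral_mul_const, mul_comm]
  · rw [indicator_of_notMem hx, indicator_of_notMem (s := {x | ((0 : ℝ), x) ∈ Φ '' O}) hx]

theorem inv_mul_setIntegral_pulse_eq {V : Type*} [NormedAddCommGroup V] {K Ω : Set (Pt n)}
    {φ' : Pt n → (Pt n →L[ℝ] ℝ)} {W : Pt n × ℝ → V} (hO : IsOpen O) (hKO : K ⊆ O)
    (hKΩ : K ⊆ Ω) (hφ' : ∀ p ∈ O, HasFDerivAt φ (φ' p) p) (hinj : InjOn Φ O)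
    (hFinv : ∀ p ∈ O, F (φ p, p.2) = p) (hS : IsOpen (Φ '' O))
    (hF : ∀ q ∈ Φ '' O, HasFDerivAt F (fderiv ℝ F q) q)
    (hWK : ∀ q : Pt n × ℝ, q.1 ∉ K → W q = 0) {ε : ℝ} (hε : 0 < ε) :
    ε⁻¹ * ∫ p in Ω, ‖W (p, φ p / ε)‖ ^ 2 =
      ∫ q : Pt n, pulledBackDensity (Φ '' O) F W ((ε * q.1, q.2), q.1) := by
  have : (volume : Measure (Pt n)).IsAddHaarMeasure := by
    rw [Measure.volume_eq_prod]
    infer_instance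
  have hvan : ∀ p, p ∉ K → ‖W (p, φ p / ε)‖ ^ 2 = 0 := fun p hp => by
    simp [hWK (p, φ p / ε) hp]
  have hΩO : ∫ p in Ω, ‖W (p, φ p / ε)‖ ^ 2 = ∫ p in O, ‖W (p, φ p / ε)‖ ^ 2 := by
    rw [setIntegral_eq_integral_of_forall_compl_eq_zero fun p hp => hvan p fun h => hp (hKΩ h),
      setIntegral_eq_integral_of_forall_compl_eq_zero fun p hp => hvan p fun h => hp (hKO h)]
  have hcov : ∫ p in O, ‖W (p, φ p / ε)‖ ^ 2 =
      ∫ q, pulledBackDensity (Φ '' O) F W (q, q.1 / ε) := by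
    rw [setIntegral_eq_setIntegral_image_of_leftInvOn volume hO
      (fun p hp => (hφ' p hp).prodMk hasFDerivAt_snd) hinj hFinv
      (fun q hq => (hF q hq).hasFDerivWithinAt), ← integral_indicator hS.measurableSet]
    congr 1
    ext q
    by_cases hq : q ∈ Φ '' O
    · obtain ⟨p, hp, rfl⟩ := hq
      simp [pulledBackDensity, hFinv p hp, mem_image_of_mem _ hp]
    · simp [pulledBackDensity, hq]
  calc ε⁻¹ * ∫ p in Ω, ‖W (p, φ p / ε)‖ ^ 2
      = |ε⁻¹| • ∫ q, pulledBackDensity (Φ '' O) F W (q, q.1 / ε) := by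
        rw [hΩO, hcov, abs_of_pos (inv_pos.2 hε), smul_eq_mul]
    _ = ∫ q : Pt n, pulledBackDensity (Φ '' O) F W ((ε * q.1, q.2), ε * q.1 / ε) :=
        (integral_comp_mul_fst volume
          (fun q : Pt n => pulledBackDensity _ F W (q, q.1 / ε)) hε.ne').symm
    _ = _ := by simp_rw [mul_div_cancel_left₀ _ hε.ne']

end Slice

/-- The surface integral over `𝒮 = {φ = 0}` is written in the graph parametrization
`x ↦ (τ x, x)`, `τ x = t(0, x)`, with surface element `dS = √(1 + |∇τ|²) dx`. -/
theorem pulse_trace_limit_general {n : ℕ} (T : ℝ)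
    (K : Set (Pt n)) (hK : IsCompact K)
    (hKΩ : K ⊆ {p : Pt n | p.1 ∈ Set.Icc 0 T})
    (O : Set (Pt n)) (hO : IsOpen O) (hKO : K ⊆ O)
    (φ : Pt n → ℝ) (hφ : ContDiffOn ℝ 1 φ O)
    (φ' : Pt n → (Pt n →L[ℝ] ℝ)) (hφ' : ∀ p ∈ O, HasFDerivAt φ (φ' p) p)
    (hΦinj : Set.InjOn (fun p : Pt n => ((φ p, p.2) : Pt n)) O)
    (F : Pt n → Pt n)
    (hFinv : ∀ p ∈ O, F (φ p, p.2) = p)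
    (hFC1 : ContDiffOn ℝ 1 F ((fun p : Pt n => ((φ p, p.2) : Pt n)) '' O))
    (τ : (Fin n → ℝ) → ℝ) (hτ : ∀ x, τ x = (F ((0 : ℝ), x)).1)
    (τ' : (Fin n → ℝ) → ((Fin n → ℝ) →L[ℝ] ℝ))
    (hτ' : ∀ x, HasFDerivAt τ (τ' x) x)
    (W : Pt n × ℝ → ℂ) (W' : Pt n × ℝ → (Pt n × ℝ) →L[ℝ] ℂ)
    (hW : ∀ q, HasFDerivAt W (W' q) q)
    (hWsupp : HasCompactSupport W)
    (hWK : ∀ q : Pt n × ℝ, q.1 ∉ K → W q = 0) :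
    Tendsto
      (fun ε : ℝ =>
        Real.sqrt (ε⁻¹ * ∫ p in {p : Pt n | p.1 ∈ Set.Icc 0 T}, ‖W (p, φ p / ε)‖ ^ 2))
      (𝓝[>] (0 : ℝ))
      (𝓝 (Real.sqrt (∫ x in {x : Fin n → ℝ |
            (((0 : ℝ), x) : Pt n) ∈ (fun p : Pt n => ((φ p, p.2) : Pt n)) '' O},
          ∫ θ : ℝ, ‖W ((τ x, x), θ)‖ ^ 2 *
            Real.sqrt (1 + ∑ i : Fin n, (τ' x (Pi.single i 1)) ^ 2) /
              gradNorm (φ' (τ x, x))))) := by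
  set Φ : Pt n → Pt n := fun p => (φ p, p.2)
  have hS : IsOpen (Φ '' O) := isOpen_image_of_leftInvOn hO
    (hφ.prodMk contDiffOn_snd) (hFC1.differentiableOn one_ne_zero) hFinv
  have hF : ∀ q ∈ Φ '' O, HasFDerivAt F (fderiv ℝ F q) q := fun q hq =>
    ((hFC1.contDiffAt (hS.mem_nhds hq)).differentiableAt one_ne_zero).hasFDerivAt
  have hKS : IsCompact (Φ '' K) :=
    hK.image_of_continuousOn ((hφ.continuousOn.mono hKO).prodMk continuousOn_snd)
  have hWKS : ∀ r ∈ Φ '' O, ∀ θ, W (F r, θ) ≠ 0 → r ∈ Φ '' K := by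
    rintro _ ⟨p, hp, rfl⟩ θ hWp
    rw [hFinv p hp] at hWp
    exact mem_image_of_mem _ (by_contra fun h => hWp (hWK _ h))
  have hWc : Continuous W := continuous_iff_continuousAt.2 fun q => (hW q).continuousAt
  have hGc := continuous_pulledBackDensity hS hFC1 hWc hWsupp hKS (image_mono hKO) hWKS
  have hGs := hasCompactSupport_pulledBackDensity hKS hWsupp hWKS
  have hlim := tendsto_integral_comp_mul_fst (volume : Measure (Fin n → ℝ)) hGc hGs
  rw [integral_pulledBackDensity_slice hO hφ' hFinv hS hF hτ hτ' W] at hlim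
  refine ((Real.continuous_sqrt.tendsto _).comp (hlim.mono_left nhdsWithin_le_nhds)).congr' ?_
  filter_upwards [self_mem_nhdsWithin] with ε hε
  rw [inv_mul_setIntegral_pulse_eq hO hKO hKΩ hφ' hΦinj hFinv hS hF hWK hε]
  rfl

/-- **Trace formula for the limiting pulse size (Proposition `a20`).**  In the setting of the
refined pulse estimate (`K` compact, `(t,x) ↦ (φ(t,x),x)` a `C¹` diffeomorphism on a
neighborhood `𝒪` of `K` with inverse `F(s,x) = (t(s,x),x)`, and `W ∈ H¹(Ω̃_T × ℝ)` with
`(t,x)`-support in `K`), one has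
`lim_{ε→0} ε^{-1/2} ‖W(t,x,φ/ε)‖_{L²(Ω̃_T)} = ‖ W / |∇_{t,x}φ|^{1/2} ‖_{L²(𝒮 × ℝ_θ)}`,
where `𝒮 = {φ = 0}`.  The surface integral over `𝒮` is expressed through the graph
parametrization `x ↦ (τ(x), x)`, `τ(x) = t(0,x)`, with surface element
`dS = √(1 + |∇τ|²) dx`. -/
theorem pulse_trace_limit {n : ℕ} (T : ℝ) (hT : 0 < T)
    (K : Set (Pt n)) (hK : IsCompact K)
    (hKΩ : K ⊆ {p : Pt n | p.1 ∈ Set.Icc 0 T})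
    (O : Set (Pt n)) (hO : IsOpen O) (hKO : K ⊆ O)
    (φ : Pt n → ℝ) (hφ : ContDiffOn ℝ 1 φ O)
    (φ' : Pt n → (Pt n →L[ℝ] ℝ)) (hφ' : ∀ p ∈ O, HasFDerivAt φ (φ' p) p)
    (hΦinj : Set.InjOn (fun p : Pt n => ((φ p, p.2) : Pt n)) O)
    (F : Pt n → Pt n)
    (hFinv : ∀ p ∈ O, F (φ p, p.2) = p)
    (hFC1 : ContDiffOn ℝ 1 F ((fun p : Pt n => ((φ p, p.2) : Pt n)) '' O))
    (τ : (Fin n → ℝ) → ℝ) (hτ : ∀ x, τ x = (F ((0 : ℝ), x)).1)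
    (τ' : (Fin n → ℝ) → ((Fin n → ℝ) →L[ℝ] ℝ))
    (hτ' : ∀ x, HasFDerivAt τ (τ' x) x)
    (W : Pt n × ℝ → ℂ) (W' : Pt n × ℝ → (Pt n × ℝ) →L[ℝ] ℂ)
    (hW : ∀ q, HasFDerivAt W (W' q) q)
    (hWsupp : HasCompactSupport W)
    (hWK : ∀ q : Pt n × ℝ, q.1 ∉ K → W q = 0) :
    Tendsto
      (fun ε : ℝ =>
        Real.sqrt (ε⁻¹ * ∫ p in {p : Pt n | p.1 ∈ Set.Icc 0 T}, ‖W (p, φ p / ε)‖ ^ 2))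
      (𝓝[>] (0 : ℝ))
      (𝓝 (Real.sqrt (∫ x in {x : Fin n → ℝ |
            (((0 : ℝ), x) : Pt n) ∈ (fun p : Pt n => ((φ p, p.2) : Pt n)) '' O},
          ∫ θ : ℝ, ‖W ((τ x, x), θ)‖ ^ 2 *
            Real.sqrt (1 + ∑ i : Fin n, (τ' x (Pi.single i 1)) ^ 2) /
              gradNorm (φ' (τ x, x))))) :=
  pulse_trace_limit_general T K hK hKΩ O hO hKO φ hφ φ' hφ' hΦinj F hFinv hFC1 τ hτ τ' hτ' W W' hW
    hWsupp hWK
end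

section
/- Let $F:\mathbb{R}^{n-1}\to\mathbb{R}$ be smooth and $G$ as above (satisfying $G_{x_1}^\top + \slashed\nabla F(\slashed\nabla G)^\top = 0$). Then the matrix $\mathcal{A} := -(\partial_{x_1} + \slashed\nabla F\cdot\slashed\nabla)\big(\slashed\nabla G\,(I + (\slashed\nabla F)^\top\slashed\nabla F)\,(\slashed\nabla G)^\top\big)$ satisfies $\mathcal{A} = 2\,(\slashed\nabla G)(\slashed\nabla^2 F)(\slashed\nabla G)^\top$. In particular, if $F$ is convex, $\mathcal{A}$ is symmetric positive semidefinite. -/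
open Filter Set Topology

/-- First partial derivative `F_k = ∂_{x'_k} F`. -/
noncomputable def dF {m : ℕ} (F : (Fin m → ℝ) → ℝ) (k : Fin m) (x' : Fin m → ℝ) : ℝ :=
  fderiv ℝ F x' (Pi.single k 1)

/-- Second partial derivative `F_{kl} = ∂_{x'_k} ∂_{x'_l} F` (the Hessian). -/
noncomputable def d2F {m : ℕ} (F : (Fin m → ℝ) → ℝ) (k l : Fin m) (x' : Fin m → ℝ) : ℝ :=
  fderiv ℝ (fun w => fderiv ℝ F w (Pi.single l 1)) x' (Pi.single k 1)

/-- Tangential Jacobian entry `(∇G)_{ik} = ∂_{x'_k} G_i`. -/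
noncomputable def dG {m : ℕ} (G : (ℝ × (Fin m → ℝ)) → (Fin m → ℝ)) (i k : Fin m)
    (x : ℝ × (Fin m → ℝ)) : ℝ :=
  fderiv ℝ (fun z => G z i) x ((0 : ℝ), Pi.single k 1)

/-- The vector field `∂_{x₁} + ∇F · ∇_{x'}` applied to a scalar function `h`. -/
noncomputable def Vfield {m : ℕ} (F : (Fin m → ℝ) → ℝ) (h : (ℝ × (Fin m → ℝ)) → ℝ)
    (x : ℝ × (Fin m → ℝ)) : ℝ :=
  fderiv ℝ h x ((1 : ℝ), 0) +
    ∑ k : Fin m, dF F k x.2 * fderiv ℝ h x ((0 : ℝ), Pi.single k 1)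

/-- The matrix `M = ∇G (I + (∇F)ᵀ ∇F) (∇G)ᵀ`, entrywise. -/
noncomputable def Mmat {m : ℕ} (F : (Fin m → ℝ) → ℝ)
    (G : (ℝ × (Fin m → ℝ)) → (Fin m → ℝ)) (i j : Fin m) (x : ℝ × (Fin m → ℝ)) : ℝ :=
  ∑ k : Fin m, ∑ l : Fin m,
    dG G i k x * ((if k = l then (1 : ℝ) else 0) + dF F k x.2 * dF F l x.2) * dG G j l x

/-- The matrix `𝒜 = -(∂_{x₁} + ∇F·∇)(∇G (I + (∇F)ᵀ∇F) (∇G)ᵀ)`, entrywise. -/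
noncomputable def Amat {m : ℕ} (F : (Fin m → ℝ) → ℝ)
    (G : (ℝ × (Fin m → ℝ)) → (Fin m → ℝ)) (i j : Fin m) (x : ℝ × (Fin m → ℝ)) : ℝ :=
  -Vfield F (Mmat F G i j) x

section Helpers

variable {m : ℕ}

/-- Expand a CLM on `Fin m → ℝ` over the standard basis. -/
lemma clm_pi_expand {W : Type*} [NormedAddCommGroup W] [NormedSpace ℝ W]
    (L : (Fin m → ℝ) →L[ℝ] W) (y : Fin m → ℝ) :
    L y = ∑ k, y k • L (Pi.single k 1) := by
  conv_lhs => rw [← Finset.univ_sum_single y]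
  rw [map_sum]
  refine Finset.sum_congr rfl fun k _ => ?_
  rw [← L.map_smul]
  congr 1
  ext j
  by_cases h : j = k <;> simp [Pi.single_apply, h]

/-- Expand a CLM on `ℝ × (Fin m → ℝ)` over the standard basis. -/
lemma clm_prod_expand {W : Type*} [NormedAddCommGroup W] [NormedSpace ℝ W]
    (L : (ℝ × (Fin m → ℝ)) →L[ℝ] W) (t : ℝ) (y : Fin m → ℝ) :
    L (t, y) = t • L (1, 0) + ∑ k, y k • L ((0 : ℝ), Pi.single k 1) := by
  have h1 : ((t, y) : ℝ × (Fin m → ℝ)) = t • ((1:ℝ), (0 : Fin m → ℝ)) + ((0:ℝ), y) := by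
    simp [Prod.ext_iff]
  rw [h1, map_add, map_smul]
  congr 1
  have := clm_pi_expand (L.comp (ContinuousLinearMap.inr ℝ ℝ (Fin m → ℝ))) y
  simpa using this

lemma Monotone.hasDerivAt_nonneg {g : ℝ → ℝ} {g' a : ℝ} (hg : Monotone g)
    (h : HasDerivAt g g' a) : 0 ≤ g' := by
  have ht : Tendsto (slope g a) (𝓝[≠] a) (𝓝 g') := hasDerivAt_iff_tendsto_slope.mp h
  have h2 : Tendsto (slope g a) (𝓝[>] a) (𝓝 g') :=
    ht.mono_left (nhdsWithin_mono a fun y hy => ne_of_gt hy)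
  refine _root_.ge_of_tendsto h2 ?_
  filter_upwards [self_mem_nhdsWithin] with y hy
  rw [slope_def_field]
  exact div_nonneg (sub_nonneg.2 (hg (le_of_lt hy))) (sub_nonneg.2 (le_of_lt hy))

lemma convex_hessian_nonneg (F : (Fin m → ℝ) → ℝ) (hF : ContDiff ℝ (⊤ : ℕ∞) F)
    (hc : ConvexOn ℝ Set.univ F) (y w : Fin m → ℝ) :
    0 ≤ fderiv ℝ (fderiv ℝ F) y w w := by
  have hFd : Differentiable ℝ F := hF.differentiable (by simp)
  have hDF : ContDiff ℝ (⊤ : ℕ∞) (fderiv ℝ F) := hF.fderiv_right (by simp)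
  set c : ℝ → (Fin m → ℝ) := fun t => y + t • w with hc_def
  have hct : ∀ t, HasDerivAt c w t := by
    intro t
    simpa [hc_def] using ((hasDerivAt_id t).smul_const w).const_add y
  set φ : ℝ → ℝ := fun t => F (c t) with hφ_def
  set ψ : ℝ → ℝ := fun t => fderiv ℝ F (c t) w with hψ_def
  have hφ : ∀ t, HasDerivAt φ (ψ t) t := fun t =>
    (hFd (c t)).hasFDerivAt.comp_hasDerivAt t (hct t)
  have hconv : ConvexOn ℝ Set.univ φ := by
    have h0 := hc.comp_affineMap (AffineMap.lineMap y (y + w))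
    have he : φ = F ∘ (AffineMap.lineMap y (y + w) : ℝ →ᵃ[ℝ] (Fin m → ℝ)) := by
      funext t
      simp [hφ_def, hc_def, AffineMap.lineMap_apply, add_comm]
    rw [he]
    simpa using h0
  have hmono : Monotone ψ := by
    have h1 : MonotoneOn (deriv φ) Set.univ :=
      hconv.monotoneOn_deriv fun z _ => (hφ z).differentiableAt
    have h2 : deriv φ = ψ := funext fun t => (hφ t).deriv
    rw [h2] at h1
    exact monotoneOn_univ.mp h1
  have hψd : HasDerivAt ψ (fderiv ℝ (fderiv ℝ F) y w w) 0 := by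
    have hd : HasDerivAt (fun t => fderiv ℝ F (c t)) (fderiv ℝ (fderiv ℝ F) (c 0) w) 0 :=
      (hDF.differentiable (by simp) (c 0)).hasFDerivAt.comp_hasDerivAt 0 (hct 0)
    have h3 := hd.clm_apply (hasDerivAt_const 0 w)
    simpa [hc_def] using h3
  exact hmono.hasDerivAt_nonneg hψd

variable {F : (Fin m → ℝ) → ℝ}

lemma d2F_eq (hF : ContDiff ℝ (⊤ : ℕ∞) F) (k l : Fin m) (y : Fin m → ℝ) :
    d2F F k l y = fderiv ℝ (fderiv ℝ F) y (Pi.single k 1) (Pi.single l 1) := by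
  have hDF : Differentiable ℝ (fderiv ℝ F) := (hF.fderiv_right (m := (⊤ : ℕ∞)) (by simp)).differentiable (by simp)
  have h := fderiv_clm_apply (hDF y)
      (differentiableAt_const (Pi.single l 1 : Fin m → ℝ))
  unfold d2F
  rw [h]
  simp

lemma d2F_symm (hF : ContDiff ℝ (⊤ : ℕ∞) F) (k l : Fin m) (y : Fin m → ℝ) :
    d2F F k l y = d2F F l k y := by
  rw [d2F_eq hF, d2F_eq hF]
  exact (hF.contDiffAt.isSymmSndFDerivAt (by rw [minSmoothness_of_isRCLikeNormedField]; exact WithTop.coe_le_coe.mpr le_top)) _ _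

/-- derivative of `z ↦ dF F k z.2` -/
lemma fderiv_dFsnd (hF : ContDiff ℝ (⊤ : ℕ∞) F) (k : Fin m) (x : ℝ × (Fin m → ℝ))
    (u : ℝ × (Fin m → ℝ)) :
    fderiv ℝ (fun z : ℝ × (Fin m → ℝ) => dF F k z.2) x u
      = fderiv ℝ (fderiv ℝ F) x.2 u.2 (Pi.single k 1) := by
  have hDF : Differentiable ℝ (fderiv ℝ F) := (hF.fderiv_right (m := (⊤ : ℕ∞)) (by simp)).differentiable (by simp)
  have h1 : fderiv ℝ (dF F k) x.2 u.2 = fderiv ℝ (fderiv ℝ F) x.2 u.2 (Pi.single k 1) := by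
    have h := fderiv_clm_apply (hDF x.2)
        (differentiableAt_const (Pi.single k 1 : Fin m → ℝ))
    unfold dF
    rw [h]; simp
  have hcomp : fderiv ℝ (fun z : ℝ × (Fin m → ℝ) => dF F k z.2) x
      = (fderiv ℝ (dF F k) x.2).comp (ContinuousLinearMap.snd ℝ ℝ (Fin m → ℝ)) := by
    have hdiff : DifferentiableAt ℝ (dF F k) x.2 := by
      unfold dF
      exact ((hDF x.2).clm_apply (differentiableAt_const _))
    have := fderiv_comp (𝕜 := ℝ) x hdiff (differentiableAt_snd (p := x))
    rw [← fderiv_snd]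
    exact this
  rw [hcomp]
  simpa using h1

lemma dF_contDiff (hF : ContDiff ℝ (⊤ : ℕ∞) F) (k : Fin m) : ContDiff ℝ (⊤ : ℕ∞) (dF F k) := by
  unfold dF
  exact (hF.fderiv_right (by simp)).clm_apply contDiff_const

lemma dFsnd_diff (hF : ContDiff ℝ (⊤ : ℕ∞) F) (k : Fin m) :
    Differentiable ℝ (fun z : ℝ × (Fin m → ℝ) => dF F k z.2) :=
  ((dF_contDiff hF k).comp contDiff_snd).differentiable (by simp)

end Helpers

/-- **The identity `𝒜 = 2 ∇G (∇²F) (∇G)ᵀ` (Section `rphase`).**  Let `F : ℝ^m → ℝ` be smooth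
and let `G` be `C²` on `{x₁ > -F(x')}` satisfying `G_{x₁}ᵀ + ∇F (∇G)ᵀ = 0` there.  Then at
every point of the domain `𝒜_{ij} = 2 Σ_{k,l} (∂_k G_i) F_{kl} (∂_l G_j)`; in particular, if
`F` is convex then `𝒜` is positive semidefinite. -/
theorem Amat_eq_two_gradG_hessF_gradG
    (m : ℕ)
    (F : (Fin m → ℝ) → ℝ) (hF : ContDiff ℝ (⊤ : ℕ∞) F)
    (G : (ℝ × (Fin m → ℝ)) → (Fin m → ℝ))
    (hG : ContDiffOn ℝ 2 G {x : ℝ × (Fin m → ℝ) | -F x.2 < x.1})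
    (hPDE : ∀ x : ℝ × (Fin m → ℝ), -F x.2 < x.1 → ∀ j : Fin m,
      fderiv ℝ (fun z => G z j) x ((1 : ℝ), 0) +
        ∑ k : Fin m, dF F k x.2 * dG G j k x = 0) :
    ∀ x : ℝ × (Fin m → ℝ), -F x.2 < x.1 →
      (∀ i j : Fin m,
        Amat F G i j x =
          2 * ∑ k : Fin m, ∑ l : Fin m, dG G i k x * d2F F k l x.2 * dG G j l x) ∧
      (ConvexOn ℝ Set.univ F →
        ∀ ξ : Fin m → ℝ,
          0 ≤ ∑ i : Fin m, ∑ j : Fin m, ξ i * Amat F G i j x * ξ j) := by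
  intro x hx
  set U : Set (ℝ × (Fin m → ℝ)) := {x : ℝ × (Fin m → ℝ) | -F x.2 < x.1} with hU_def
  have hU : IsOpen U := isOpen_lt ((hF.continuous.comp continuous_snd).neg) continuous_fst
  have hUx : U ∈ 𝓝 x := hU.mem_nhds hx
  -- C² regularity of components of G at x
  have hgC2 : ∀ j : Fin m, ContDiffAt ℝ 2 (fun z => G z j) x := fun j =>
    (((ContinuousLinearMap.proj (R := ℝ) (φ := fun _ : Fin m => ℝ) j).contDiff).comp_contDiffOn
      hG).contDiffAt hUx
  have hDg : ∀ j : Fin m, DifferentiableAt ℝ (fderiv ℝ (fun z => G z j)) x := fun j =>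
    ((hgC2 j).fderiv_right (m := 1) (by norm_num)).differentiableAt one_ne_zero
  have hsymm : ∀ j : Fin m, ∀ u v₀ : ℝ × (Fin m → ℝ),
      fderiv ℝ (fderiv ℝ (fun z => G z j)) x u v₀
        = fderiv ℝ (fderiv ℝ (fun z => G z j)) x v₀ u := fun j =>
    (hgC2 j).isSymmSndFDerivAt (by simp)
  have hdG_diff : ∀ j l : Fin m, DifferentiableAt ℝ (fun z => dG G j l z) x := by
    intro j l
    unfold dG
    exact (hDg j).clm_apply (differentiableAt_const _)
  -- the direction vector
  set v : ℝ × (Fin m → ℝ) := ((1 : ℝ), fun k => dF F k x.2) with hv_def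
  have hVfield : ∀ h : (ℝ × (Fin m → ℝ)) → ℝ, Vfield F h x = fderiv ℝ h x v := by
    intro h
    unfold Vfield
    rw [hv_def]
    rw [clm_prod_expand (fderiv ℝ h x) 1 (fun k => dF F k x.2)]
    simp [smul_eq_mul]
  -- the auxiliary map q
  set q : (ℝ × (Fin m → ℝ)) → (ℝ × (Fin m → ℝ)) :=
    fun z => ((1 : ℝ), fun k => dF F k z.2) with hq_def
  have hqx : q x = v := rfl
  have hdfk : ∀ k, DifferentiableAt ℝ (fun z : ℝ × (Fin m → ℝ) => dF F k z.2) x :=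
    fun k => (dFsnd_diff hF k) x
  have hpi_diff : DifferentiableAt ℝ (fun z : ℝ × (Fin m → ℝ) => fun k => dF F k z.2) x :=
    differentiableAt_pi.2 hdfk
  have hq_diff : DifferentiableAt ℝ q x := (differentiableAt_const (1:ℝ)).prodMk hpi_diff
  have hq_fderiv : ∀ u : ℝ × (Fin m → ℝ), fderiv ℝ q x u
      = ((0 : ℝ), fun k => fderiv ℝ (fderiv ℝ F) x.2 u.2 (Pi.single k 1)) := by
    intro u
    rw [hq_def]
    rw [DifferentiableAt.fderiv_prodMk (differentiableAt_const (1:ℝ)) hpi_diff]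
    rw [ContinuousLinearMap.prod_apply]
    rw [fderiv_pi hdfk]
    ext <;> simp [fderiv_dFsnd hF _ x u]
  -- Differentiating the PDE
  have hVdG : ∀ j l : Fin m,
      fderiv ℝ (fun z => dG G j l z) x v = -∑ k, d2F F l k x.2 * dG G j k x := by
    intro j l
    set Dg := fderiv ℝ (fun z => G z j) with hDg_def
    have hH0 : (fun z => Dg z (q z)) =ᶠ[𝓝 x] (fun _ => (0:ℝ)) := by
      filter_upwards [hUx] with z hz
      have hp := hPDE z hz j
      show Dg z (q z) = 0
      rw [hq_def]
      rw [clm_prod_expand (Dg z) 1 (fun k => dF F k z.2)]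
      simpa [dG, smul_eq_mul, hDg_def] using hp
    have hfH : fderiv ℝ (fun z => Dg z (q z)) x = 0 := by
      rw [hH0.fderiv_eq]
      simp
    have hclm : fderiv ℝ (fun z => Dg z (q z)) x
        = Dg x ∘L fderiv ℝ q x + (fderiv ℝ Dg x).flip (q x) :=
      fderiv_clm_apply (hDg j) hq_diff
    have happ : ∀ u : ℝ × (Fin m → ℝ),
        (0:ℝ) = fderiv ℝ Dg x u (q x) + Dg x (fderiv ℝ q x u) := by
      intro u
      have h0 : (0 : (ℝ × (Fin m → ℝ)) →L[ℝ] ℝ)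
          = Dg x ∘L fderiv ℝ q x + (fderiv ℝ Dg x).flip (q x) := by
        rw [← hclm, hfH]
      have := congrArg (fun L : (ℝ × (Fin m → ℝ)) →L[ℝ] ℝ => L u) h0
      simpa [add_comm] using this
    set u : ℝ × (Fin m → ℝ) := ((0:ℝ), Pi.single l 1) with hu_def
    have h2 : fderiv ℝ (fun z => dG G j l z) x v = fderiv ℝ Dg x v u := by
      have : (fun z => dG G j l z) = fun z => Dg z u := rfl
      rw [this, fderiv_clm_apply (hDg j) (differentiableAt_const u)]
      simp
      rfl
    rw [h2, hsymm j v u]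
    have h3 : fderiv ℝ Dg x u (q x) = -Dg x (fderiv ℝ q x u) := by
      have := happ u
      linarith
    rw [hqx] at h3
    rw [h3]
    rw [hq_fderiv u]
    rw [clm_prod_expand (Dg x) 0 _]
    simp only [hu_def, zero_smul, zero_add, smul_eq_mul]
    rw [zero_mul, zero_add, neg_inj]
    exact Finset.sum_congr rfl fun k _ => by rw [← d2F_eq hF l k]; rfl
  -- derivative of dF along V
  have hVdF : ∀ k : Fin m,
      fderiv ℝ (fun z : ℝ × (Fin m → ℝ) => dF F k z.2) x v
        = ∑ p, dF F p x.2 * d2F F p k x.2 := by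
    intro k
    rw [fderiv_dFsnd hF k x v]
    have hv2 : (v.2 : Fin m → ℝ) = fun p => dF F p x.2 := rfl
    rw [hv2, clm_pi_expand (fderiv ℝ (fderiv ℝ F) x.2) (fun p => dF F p x.2)]
    simp only [ContinuousLinearMap.coe_sum', Finset.sum_apply, ContinuousLinearMap.coe_smul',
      Pi.smul_apply, smul_eq_mul]
    exact Finset.sum_congr rfl fun p _ => by rw [← d2F_eq hF p k]
  -- rewrite of Mmat
  have hM : ∀ i j : Fin m, Mmat F G i j = fun z =>
      (∑ k, dG G i k z * dG G j k z)
        + (∑ k, dF F k z.2 * dG G i k z) * (∑ k, dF F k z.2 * dG G j k z) := by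
    intro i j
    funext z
    unfold Mmat
    rw [Finset.sum_mul_sum]
    rw [← Finset.sum_add_distrib]
    refine Finset.sum_congr rfl fun k _ => ?_
    have hterm : ∀ l : Fin m,
        dG G i k z * ((if k = l then (1:ℝ) else 0) + dF F k z.2 * dF F l z.2) * dG G j l z
          = (if k = l then dG G i k z * dG G j l z else 0)
            + (dF F k z.2 * dG G i k z) * (dF F l z.2 * dG G j l z) := fun l => by
      split <;> ring
    simp only [hterm, Finset.sum_add_distrib, Finset.sum_ite_eq, Finset.mem_univ, if_true]
  -- differentiability of the three sums
  have hS1d : ∀ i j : Fin m,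
      DifferentiableAt ℝ (fun z => ∑ k, dG G i k z * dG G j k z) x := fun i j =>
    DifferentiableAt.fun_sum fun k _ => (hdG_diff i k).mul (hdG_diff j k)
  have hS2d : ∀ i : Fin m,
      DifferentiableAt ℝ (fun z : ℝ × (Fin m → ℝ) => ∑ k, dF F k z.2 * dG G i k z) x :=
    fun i => DifferentiableAt.fun_sum fun k _ => (hdfk k).mul (hdG_diff i k)
  -- V of the first sum
  have eVS1 : ∀ i j : Fin m, fderiv ℝ (fun z => ∑ k, dG G i k z * dG G j k z) x v
      = -(2 * ∑ k, ∑ l, dG G i k x * d2F F k l x.2 * dG G j l x) := by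
    intro i j
    rw [fderiv_fun_sum fun k _ => (hdG_diff i k).fun_mul (hdG_diff j k)]
    rw [ContinuousLinearMap.sum_apply]
    have hterm : ∀ k : Fin m,
        fderiv ℝ (fun z => dG G i k z * dG G j k z) x v
          = -((∑ p, d2F F k p x.2 * dG G i p x) * dG G j k x)
            - dG G i k x * (∑ p, d2F F k p x.2 * dG G j p x) := by
      intro k
      rw [fderiv_fun_mul (hdG_diff i k) (hdG_diff j k)]
      simp only [ContinuousLinearMap.add_apply, ContinuousLinearMap.coe_smul',
        Pi.smul_apply, smul_eq_mul]
      rw [hVdG i k, hVdG j k]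
      ring
    rw [Finset.sum_congr rfl fun k _ => hterm k]
    have h1 : ∑ k, (∑ p, d2F F k p x.2 * dG G i p x) * dG G j k x
        = ∑ k, ∑ l, dG G i k x * d2F F k l x.2 * dG G j l x := by
      have he : ∀ k : Fin m, (∑ p, d2F F k p x.2 * dG G i p x) * dG G j k x
          = ∑ p, d2F F k p x.2 * dG G i p x * dG G j k x := fun k => Finset.sum_mul _ _ _
      rw [Finset.sum_congr rfl fun k _ => he k, Finset.sum_comm]
      refine Finset.sum_congr rfl fun k _ => Finset.sum_congr rfl fun l _ => ?_
      rw [d2F_symm hF l k]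
      ring
    have h2 : ∑ k, dG G i k x * (∑ p, d2F F k p x.2 * dG G j p x)
        = ∑ k, ∑ l, dG G i k x * d2F F k l x.2 * dG G j l x := by
      refine Finset.sum_congr rfl fun k _ => ?_
      rw [Finset.mul_sum]
      exact Finset.sum_congr rfl fun l _ => by ring
    rw [Finset.sum_sub_distrib, Finset.sum_neg_distrib, h1, h2]
    ring
  -- V of the coupling sums vanishes
  have eVS2 : ∀ i : Fin m,
      fderiv ℝ (fun z : ℝ × (Fin m → ℝ) => ∑ k, dF F k z.2 * dG G i k z) x v = 0 := by
    intro i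
    rw [fderiv_fun_sum fun k _ => (hdfk k).fun_mul (hdG_diff i k)]
    rw [ContinuousLinearMap.sum_apply]
    have hterm : ∀ k : Fin m,
        fderiv ℝ (fun z : ℝ × (Fin m → ℝ) => dF F k z.2 * dG G i k z) x v
          = (∑ p, dF F p x.2 * d2F F p k x.2) * dG G i k x
            - dF F k x.2 * (∑ p, d2F F k p x.2 * dG G i p x) := by
      intro k
      rw [fderiv_fun_mul (hdfk k) (hdG_diff i k)]
      simp only [ContinuousLinearMap.add_apply, ContinuousLinearMap.coe_smul',
        Pi.smul_apply, smul_eq_mul]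
      rw [hVdG i k, hVdF k]
      ring
    rw [Finset.sum_congr rfl fun k _ => hterm k]
    rw [Finset.sum_sub_distrib]
    have h1 : ∑ k, (∑ p, dF F p x.2 * d2F F p k x.2) * dG G i k x
        = ∑ k, dF F k x.2 * (∑ p, d2F F k p x.2 * dG G i p x) := by
      have he : ∀ k : Fin m, (∑ p, dF F p x.2 * d2F F p k x.2) * dG G i k x
          = ∑ p, dF F p x.2 * d2F F p k x.2 * dG G i k x := fun k => Finset.sum_mul _ _ _
      have he2 : ∀ k : Fin m, dF F k x.2 * (∑ p, d2F F k p x.2 * dG G i p x)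
          = ∑ p, dF F k x.2 * (d2F F k p x.2 * dG G i p x) := fun k => Finset.mul_sum _ _ _
      rw [Finset.sum_congr rfl fun k _ => he k, Finset.sum_congr rfl fun k _ => he2 k,
        Finset.sum_comm]
      exact Finset.sum_congr rfl fun k _ => Finset.sum_congr rfl fun l _ => by ring
    rw [h1, sub_self]
  -- Part 1
  have hpart1 : ∀ i j : Fin m,
      Amat F G i j x = 2 * ∑ k, ∑ l, dG G i k x * d2F F k l x.2 * dG G j l x := by
    intro i j
    unfold Amat
    rw [hVfield, hM i j]
    rw [fderiv_fun_add (hS1d i j) ((hS2d i).fun_mul (hS2d j))]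
    rw [ContinuousLinearMap.add_apply]
    rw [fderiv_fun_mul (hS2d i) (hS2d j)]
    simp only [ContinuousLinearMap.add_apply, ContinuousLinearMap.coe_smul',
      Pi.smul_apply, smul_eq_mul]
    rw [eVS1 i j, eVS2 i, eVS2 j]
    ring
  refine ⟨hpart1, ?_⟩
  -- Part 2
  intro hconv ξ
  have key : ∑ i, ∑ j, ξ i * Amat F G i j x * ξ j
      = 2 * ∑ k, ∑ l, (∑ i, ξ i * dG G i k x) * d2F F k l x.2 * (∑ j, ξ j * dG G j l x) := by
    have swap4 : ∀ f : Fin m → Fin m → Fin m → Fin m → ℝ,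
        (∑ i, ∑ j, ∑ k, ∑ l, f i j k l) = ∑ k, ∑ l, ∑ i, ∑ j, f i j k l := by
      intro f
      calc (∑ i, ∑ j, ∑ k, ∑ l, f i j k l)
          = ∑ i, ∑ k, ∑ j, ∑ l, f i j k l :=
            Finset.sum_congr rfl fun i _ => Finset.sum_comm
        _ = ∑ i, ∑ k, ∑ l, ∑ j, f i j k l :=
            Finset.sum_congr rfl fun i _ => Finset.sum_congr rfl fun k _ => Finset.sum_comm
        _ = ∑ k, ∑ i, ∑ l, ∑ j, f i j k l := Finset.sum_comm
        _ = ∑ k, ∑ l, ∑ i, ∑ j, f i j k l :=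
            Finset.sum_congr rfl fun k _ => Finset.sum_comm
    have lhs_eq : ∑ i, ∑ j, ξ i * Amat F G i j x * ξ j
        = ∑ i, ∑ j, ∑ k, ∑ l,
            2 * (ξ i * dG G i k x * (d2F F k l x.2 * (ξ j * dG G j l x))) := by
      refine Finset.sum_congr rfl fun i _ => Finset.sum_congr rfl fun j _ => ?_
      rw [hpart1 i j]
      rw [show ξ i * (2 * ∑ k, ∑ l, dG G i k x * d2F F k l x.2 * dG G j l x) * ξ j
          = (∑ k, ∑ l, dG G i k x * d2F F k l x.2 * dG G j l x) * (2 * ξ i * ξ j) by ring]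
      rw [Finset.sum_mul]
      refine Finset.sum_congr rfl fun k _ => ?_
      rw [Finset.sum_mul]
      exact Finset.sum_congr rfl fun l _ => by ring
    have rhs_eq : 2 * ∑ k, ∑ l, (∑ i, ξ i * dG G i k x) * d2F F k l x.2 * (∑ j, ξ j * dG G j l x)
        = ∑ k, ∑ l, ∑ i, ∑ j,
            2 * (ξ i * dG G i k x * (d2F F k l x.2 * (ξ j * dG G j l x))) := by
      rw [Finset.mul_sum]
      refine Finset.sum_congr rfl fun k _ => ?_
      rw [Finset.mul_sum]
      refine Finset.sum_congr rfl fun l _ => ?_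
      rw [show (2:ℝ) * ((∑ i, ξ i * dG G i k x) * d2F F k l x.2 * (∑ j, ξ j * dG G j l x))
          = ((∑ i, ξ i * dG G i k x) * (∑ j, ξ j * dG G j l x)) * (2 * d2F F k l x.2) by ring]
      rw [Finset.sum_mul_sum]
      rw [Finset.sum_mul]
      refine Finset.sum_congr rfl fun i _ => ?_
      rw [Finset.sum_mul]
      exact Finset.sum_congr rfl fun j _ => by ring
    rw [lhs_eq, rhs_eq, swap4]
  rw [key]
  set η : Fin m → ℝ := fun k => ∑ i, ξ i * dG G i k x with hη_def
  have hquad : ∑ k, ∑ l, η k * d2F F k l x.2 * η l = fderiv ℝ (fderiv ℝ F) x.2 η η := by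
    conv_rhs => rw [clm_pi_expand (fderiv ℝ (fderiv ℝ F) x.2) η]
    simp only [ContinuousLinearMap.coe_sum', Finset.sum_apply, ContinuousLinearMap.coe_smul',
      Pi.smul_apply, smul_eq_mul]
    refine Finset.sum_congr rfl fun k _ => ?_
    conv_rhs => rw [clm_pi_expand (fderiv ℝ (fderiv ℝ F) x.2 (Pi.single k 1)) η]
    rw [Finset.mul_sum]
    refine Finset.sum_congr rfl fun l _ => ?_
    rw [← d2F_eq hF k l, smul_eq_mul]
    ring
  have h0 : 0 ≤ ∑ k, ∑ l, η k * d2F F k l x.2 * η l := by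
    rw [hquad]
    exact convex_hessian_nonneg F hF hconv x.2 η
  have : (∑ k, ∑ l, (∑ i, ξ i * dG G i k x) * d2F F k l x.2 * (∑ j, ξ j * dG G j l x))
      = ∑ k, ∑ l, η k * d2F F k l x.2 * η l := rfl
  rw [this]
  linarith
end
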